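/- Let v1, v2, y, z1 be jointly distributed random variables with I(y; z1 | v1, v2) = 0 and I(y; v1 | v2) = 0. Then I(y; z1) ≥ I(y; v2) − I(v1; v2 | z1) − I(y; v2 | v1). -/

import Mathlib

open scoped BigOperators

/-- Conditional mutual information I(X;Y|Z) for a finite probability space
given by a pmf `p` on `Ω`. -/
noncomputable def condMI {Ω A B C : Type} [Fintype Ω] [Fintype A] [Fintype B] [Fintype C]
    [DecidableEq A] [DecidableEq B] [DecidableEq C]
    (p : Ω → ℝ) (X : Ω → A) (Y : Ω → B) (Z : Ω → C) : ℝ :=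
  ∑ a : A, ∑ b : B, ∑ c : C,
    (∑ ω : Ω, if X ω = a ∧ Y ω = b ∧ Z ω = c then p ω else 0) *
      Real.log
        ((∑ ω : Ω, if X ω = a ∧ Y ω = b ∧ Z ω = c then p ω else 0) *
            (∑ ω : Ω, if Z ω = c then p ω else 0) /
          ((∑ ω : Ω, if X ω = a ∧ Z ω = c then p ω else 0) *
            (∑ ω : Ω, if Y ω = b ∧ Z ω = c then p ω else 0)))

/-- Mutual information I(X;Y) as conditional mutual information given a constant. -/
noncomputable def mi {Ω A B : Type} [Fintype Ω] [Fintype A] [Fintype B]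
    [DecidableEq A] [DecidableEq B] (p : Ω → ℝ) (X : Ω → A) (Y : Ω → B) : ℝ :=
  condMI p X Y (fun _ => ())

/-!
Only the chain rule and nonnegativity of conditional mutual information are needed.
The chain rule holds pointwise: `condMI` is the `p`-average of the log-ratio
`condInfoDensity`, which splits additively at every `ω` of positive mass.
Nonnegativity is Gibbs' inequality applied, for each value of the conditioning variable,
to the joint array of the other two variables.

Write `V = (v1, v2)`. Expanding `I(y; V, z1)` in both orders and using `I(y; z1 | V) = 0` and
`I(y; v1 | v2) = 0` gives `I(y; z1) = I(y; v2) - I(y; V | z1)`, where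
`I(y; V | z1) = I(y; v1 | z1) + I(y; v2 | v1, z1)`. Since `z1` carries no information about `y`
beyond `(v1, v2)`, adding it to the conditioning cannot increase information about `y`: this
makes `I(y; v1 | v2, z1) = 0`, so `I(y; v1 | z1) ≤ I(v1; v2 | z1)`, and
`I(y; v2 | v1, z1) ≤ I(y; v2 | v1)`.
-/

open Finset Real

lemma sum_mul_log_div_nonneg {ι : Type*} [Fintype ι] (f g : ι → ℝ) (hf : ∀ i, 0 ≤ f i)
    (hg : ∀ i, 0 ≤ g i) (hfg : ∀ i, 0 < f i → 0 < g i) (hsum : ∑ i, g i ≤ ∑ i, f i) :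
    0 ≤ ∑ i, f i * log (f i / g i) := by
  have hterm : ∀ i, f i - g i ≤ f i * log (f i / g i) := by
    intro i
    rcases (hf i).eq_or_lt with h | h
    · simp [← h, hg i]
    · have hlog := one_sub_inv_le_log_of_pos (div_pos h (hfg i h))
      rw [inv_div] at hlog
      calc f i - g i = f i * (1 - g i / f i) := by field_simp
        _ ≤ _ := mul_le_mul_of_nonneg_left hlog h.le
  calc 0 ≤ ∑ i, (f i - g i) := by rw [sum_sub_distrib]; linarith
    _ ≤ _ := sum_le_sum fun i _ => hterm i

lemma sum_sum_mul_log_div_marginals_nonneg {α β : Type*} [Fintype α] [Fintype β]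
    (f : α → β → ℝ) (hf : ∀ a b, 0 ≤ f a b) :
    0 ≤ ∑ a, ∑ b, f a b * log (f a b * (∑ a', ∑ b', f a' b') /
      ((∑ b', f a b') * (∑ a', f a' b))) := by
  set s := ∑ a', ∑ b', f a' b'
  set u := fun a => ∑ b', f a b'
  set v := fun b => ∑ a', f a' b
  have hu : ∀ a, 0 ≤ u a := fun a => sum_nonneg fun b _ => hf a b
  have hv : ∀ b, 0 ≤ v b := fun b => sum_nonneg fun a _ => hf a b
  have hs : 0 ≤ s := sum_nonneg fun a _ => hu a
  have hfu : ∀ a b, f a b ≤ u a := fun a b => single_le_sum (fun b _ => hf a b) (mem_univ b)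
  have hfv : ∀ a b, f a b ≤ v b := fun a b => single_le_sum (fun a _ => hf a b) (mem_univ a)
  have hfs : ∀ a b, f a b ≤ s := fun a b =>
    (hfu a b).trans (single_le_sum (fun a _ => hu a) (mem_univ a))
  have hvs : ∑ b, v b = s := sum_comm
  have key := sum_mul_log_div_nonneg (fun t : α × β => f t.1 t.2) (fun t => u t.1 * v t.2 / s)
    (fun t => hf t.1 t.2) (fun t => div_nonneg (mul_nonneg (hu _) (hv _)) hs)
    (fun t ht => div_pos (mul_pos (ht.trans_le (hfu _ _)) (ht.trans_le (hfv _ _)))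
      (ht.trans_le (hfs _ _)))
    (by
      rw [Fintype.sum_prod_type, Fintype.sum_prod_type]
      simp only [← sum_div, ← mul_sum, ← sum_mul, hvs]
      exact (mul_self_div_self s).le)
  rw [Fintype.sum_prod_type] at key
  simpa only [div_div_eq_mul_div] using key

lemma log_mul_div_eq_add_log {q e a c d f : ℝ} (hq : 0 < q) (he : 0 < e) (ha : 0 < a)
    (hc : 0 < c) (hd : 0 < d) (hf : 0 < f) :
    log (q * c / (a * d)) = log (e * c / (a * f)) + log (q * f / (e * d)) := by
  rw [← log_mul (by positivity) (by positivity)]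
  congr 1
  field_simp

noncomputable def pr {Ω : Type} [Fintype Ω] (p : Ω → ℝ) (E : Ω → Prop) [DecidablePred E] : ℝ :=
  ∑ ω, if E ω then p ω else 0

section pr

variable {Ω : Type} [Fintype Ω] {p : Ω → ℝ}

lemma pr_nonneg (hp : ∀ ω, 0 ≤ p ω) (E : Ω → Prop) [DecidablePred E] : 0 ≤ pr p E :=
  sum_nonneg fun ω _ => by split_ifs <;> simp [hp ω]

lemma le_pr (hp : ∀ ω, 0 ≤ p ω) {E : Ω → Prop} [DecidablePred E] {ω : Ω} (h : E ω) :
    p ω ≤ pr p E :=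
  calc p ω = if E ω then p ω else 0 := (if_pos h).symm
    _ ≤ pr p E := single_le_sum (f := fun ω => if E ω then p ω else 0)
      (fun ω _ => by split_ifs <;> simp [hp ω]) (mem_univ ω)

lemma pr_congr {E F : Ω → Prop} [DecidablePred E] [DecidablePred F] (h : ∀ ω, E ω ↔ F ω) :
    pr p E = pr p F :=
  sum_congr rfl fun ω _ => if_congr (h ω) rfl rfl

lemma sum_pr_and {τ : Type} [Fintype τ] [DecidableEq τ] (T : Ω → τ) (E : Ω → Prop)
    [DecidablePred E] : ∑ t, pr p (fun ω => T ω = t ∧ E ω) = pr p E := by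
  unfold pr
  rw [sum_comm]
  refine sum_congr rfl fun ω _ => ?_
  by_cases hE : E ω <;> simp [hE]

lemma sum_pr_mul {τ : Type} [Fintype τ] [DecidableEq τ] (T : Ω → τ) (F : τ → ℝ) :
    ∑ t, pr p (fun ω => T ω = t) * F t = ∑ ω, p ω * F (T ω) := by
  unfold pr
  simp only [sum_mul, ite_mul, zero_mul]
  rw [sum_comm]
  simp

end pr

section density

variable {Ω A B C : Type} [Fintype Ω] [DecidableEq A] [DecidableEq B] [DecidableEq C]

noncomputable def condInfoDensity (p : Ω → ℝ) (X : Ω → A) (Y : Ω → B) (Z : Ω → C) (ω : Ω) : ℝ :=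
  log (pr p (fun ω' => X ω' = X ω ∧ Y ω' = Y ω ∧ Z ω' = Z ω) * pr p (fun ω' => Z ω' = Z ω) /
    (pr p (fun ω' => X ω' = X ω ∧ Z ω' = Z ω) * pr p (fun ω' => Y ω' = Y ω ∧ Z ω' = Z ω)))

lemma condInfoDensity_congr {A' B' C' : Type} [DecidableEq A'] [DecidableEq B'] [DecidableEq C']
    {p : Ω → ℝ} {X : Ω → A} {Y : Ω → B} {Z : Ω → C} {X' : Ω → A'} {Y' : Ω → B'} {Z' : Ω → C'}
    (hX : ∀ ω ω', X ω' = X ω ↔ X' ω' = X' ω) (hY : ∀ ω ω', Y ω' = Y ω ↔ Y' ω' = Y' ω)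
    (hZ : ∀ ω ω', Z ω' = Z ω ↔ Z' ω' = Z' ω) (ω : Ω) :
    condInfoDensity p X Y Z ω = condInfoDensity p X' Y' Z' ω := by
  simp only [condInfoDensity, hX ω, hY ω, hZ ω]

lemma condInfoDensity_comm (p : Ω → ℝ) (X : Ω → A) (Y : Ω → B) (Z : Ω → C) (ω : Ω) :
    condInfoDensity p X Y Z ω = condInfoDensity p Y X Z ω := by
  rw [condInfoDensity, condInfoDensity, pr_congr fun _ => and_left_comm,
    mul_comm (pr p fun ω' => X ω' = X ω ∧ Z ω' = Z ω)]

lemma condInfoDensity_pair {B' : Type} [DecidableEq B'] {p : Ω → ℝ} (hp : ∀ ω, 0 ≤ p ω)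
    {ω : Ω} (hω : 0 < p ω) (X : Ω → A) (Y : Ω → B) (Y' : Ω → B') (Z : Ω → C) :
    condInfoDensity p X (fun ω => (Y ω, Y' ω)) Z ω =
      condInfoDensity p X Y Z ω + condInfoDensity p X Y' (fun ω => (Y ω, Z ω)) ω := by
  have pos : ∀ (E : Ω → Prop) [DecidablePred E], E ω → 0 < pr p E :=
    fun E _ h => hω.trans_le (le_pr hp h)
  simp only [condInfoDensity, Prod.mk.injEq, and_assoc]
  rw [pr_congr (E := fun ω' => X ω' = X ω ∧ Y' ω' = Y' ω ∧ Y ω' = Y ω ∧ Z ω' = Z ω)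
      fun _ => and_congr_right' and_left_comm,
    pr_congr (E := fun ω' => Y' ω' = Y' ω ∧ Y ω' = Y ω ∧ Z ω' = Z ω) fun _ => and_left_comm]
  exact log_mul_div_eq_add_log (pos _ ⟨rfl, rfl, rfl, rfl⟩) (pos _ ⟨rfl, rfl, rfl⟩)
    (pos _ ⟨rfl, rfl⟩) (pos _ rfl) (pos _ ⟨rfl, rfl, rfl⟩) (pos _ ⟨rfl, rfl⟩)

end density

section condMI

variable {Ω A B C : Type} [Fintype Ω] [Fintype A] [Fintype B] [Fintype C]
  [DecidableEq A] [DecidableEq B] [DecidableEq C] {p : Ω → ℝ}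

lemma condMI_eq_sum_pr (X : Ω → A) (Y : Ω → B) (Z : Ω → C) :
    condMI p X Y Z = ∑ a, ∑ b, ∑ c, pr p (fun ω => X ω = a ∧ Y ω = b ∧ Z ω = c) *
      log (pr p (fun ω => X ω = a ∧ Y ω = b ∧ Z ω = c) * pr p (fun ω => Z ω = c) /
        (pr p (fun ω => X ω = a ∧ Z ω = c) * pr p (fun ω => Y ω = b ∧ Z ω = c))) :=
  rfl

lemma condMI_eq_sum_mul_condInfoDensity (X : Ω → A) (Y : Ω → B) (Z : Ω → C) :
    condMI p X Y Z = ∑ ω, p ω * condInfoDensity p X Y Z ω := by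
  refine Eq.trans ?_ (sum_pr_mul (fun ω => (X ω, Y ω, Z ω)) fun t =>
    log (pr p (fun ω' => X ω' = t.1 ∧ Y ω' = t.2.1 ∧ Z ω' = t.2.2) * pr p (fun ω' => Z ω' = t.2.2) /
      (pr p (fun ω' => X ω' = t.1 ∧ Z ω' = t.2.2) * pr p (fun ω' => Y ω' = t.2.1 ∧ Z ω' = t.2.2))))
  simp only [Fintype.sum_prod_type, Prod.mk.injEq]
  rfl

lemma condMI_congr {A' B' C' : Type} [Fintype A'] [Fintype B'] [Fintype C']
    [DecidableEq A'] [DecidableEq B'] [DecidableEq C']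
    {X : Ω → A} {Y : Ω → B} {Z : Ω → C} {X' : Ω → A'} {Y' : Ω → B'} {Z' : Ω → C'}
    (hX : ∀ ω ω', X ω' = X ω ↔ X' ω' = X' ω) (hY : ∀ ω ω', Y ω' = Y ω ↔ Y' ω' = Y' ω)
    (hZ : ∀ ω ω', Z ω' = Z ω ↔ Z' ω' = Z' ω) :
    condMI p X Y Z = condMI p X' Y' Z' := by
  simp only [condMI_eq_sum_mul_condInfoDensity, condInfoDensity_congr hX hY hZ]

lemma condMI_comm (X : Ω → A) (Y : Ω → B) (Z : Ω → C) :
    condMI p X Y Z = condMI p Y X Z := by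
  simp only [condMI_eq_sum_mul_condInfoDensity, condInfoDensity_comm p X Y Z]

lemma condMI_pair {B' : Type} [Fintype B'] [DecidableEq B'] (hp : ∀ ω, 0 ≤ p ω)
    (X : Ω → A) (Y : Ω → B) (Y' : Ω → B') (Z : Ω → C) :
    condMI p X (fun ω => (Y ω, Y' ω)) Z =
      condMI p X Y Z + condMI p X Y' (fun ω => (Y ω, Z ω)) := by
  simp only [condMI_eq_sum_mul_condInfoDensity, ← sum_add_distrib, ← mul_add]
  refine sum_congr rfl fun ω _ => ?_
  rcases (hp ω).eq_or_lt with h | h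
  · simp [← h]
  · rw [condInfoDensity_pair hp h]

lemma condMI_nonneg (hp : ∀ ω, 0 ≤ p ω) (X : Ω → A) (Y : Ω → B) (Z : Ω → C) :
    0 ≤ condMI p X Y Z := by
  have hXZ : ∀ a c, ∑ b, pr p (fun ω => X ω = a ∧ Y ω = b ∧ Z ω = c) =
      pr p (fun ω => X ω = a ∧ Z ω = c) := fun a c =>
    (sum_congr rfl fun b _ => pr_congr fun ω => and_left_comm).trans (sum_pr_and Y _)
  have hYZ : ∀ b c, ∑ a, pr p (fun ω => X ω = a ∧ Y ω = b ∧ Z ω = c) =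
      pr p (fun ω => Y ω = b ∧ Z ω = c) := fun b c => sum_pr_and X _
  have hZ : ∀ c, ∑ a, pr p (fun ω => X ω = a ∧ Z ω = c) = pr p (fun ω => Z ω = c) :=
    fun c => sum_pr_and X _
  rw [condMI_eq_sum_pr]
  refine le_of_le_of_eq (sum_nonneg fun c _ => ?_)
    (sum_comm.trans (sum_congr rfl fun a _ => sum_comm))
  have := sum_sum_mul_log_div_marginals_nonneg
    (fun a b => pr p (fun ω => X ω = a ∧ Y ω = b ∧ Z ω = c)) fun a b => pr_nonneg hp _
  simpa only [hXZ, hYZ, hZ] using this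

lemma condMI_pair_right_comm {D : Type} [Fintype D] [DecidableEq D]
    (X : Ω → A) (Y : Ω → B) (Z : Ω → C) (W : Ω → D) :
    condMI p X Y (fun ω => (Z ω, W ω)) = condMI p X Y (fun ω => (W ω, Z ω)) :=
  condMI_congr (fun _ _ => Iff.rfl) (fun _ _ => Iff.rfl) fun _ _ => Prod.swap_inj.symm

lemma condMI_pair_add_comm {D : Type} [Fintype D] [DecidableEq D] (hp : ∀ ω, 0 ≤ p ω)
    (X : Ω → A) (Y : Ω → B) (Z : Ω → C) (W : Ω → D) :
    condMI p X Y W + condMI p X Z (fun ω => (Y ω, W ω)) =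
      condMI p X Z W + condMI p X Y (fun ω => (Z ω, W ω)) := by
  rw [← condMI_pair hp, ← condMI_pair hp]
  exact condMI_congr (fun _ _ => Iff.rfl) (fun _ _ => Prod.swap_inj.symm) fun _ _ => Iff.rfl

lemma condMI_pair_le_of_condMI_eq_zero {D : Type} [Fintype D] [DecidableEq D]
    (hp : ∀ ω, 0 ≤ p ω) {X : Ω → A} {Y : Ω → B} {Z : Ω → C} {W : Ω → D}
    (h : condMI p X Z (fun ω => (Y ω, W ω)) = 0) :
    condMI p X Y (fun ω => (W ω, Z ω)) ≤ condMI p X Y W := by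
  have := condMI_pair_add_comm hp X Y Z W
  rw [condMI_pair_right_comm X Y Z W] at this
  linarith [condMI_nonneg hp X Z W]

lemma mi_pair (hp : ∀ ω, 0 ≤ p ω) (X : Ω → A) (Y : Ω → B) (Z : Ω → C) :
    mi p X (fun ω => (Y ω, Z ω)) = mi p X Z + condMI p X Y Z := by
  rw [mi, condMI_congr (fun _ _ => Iff.rfl) (fun _ _ => Prod.swap_inj.symm) fun _ _ => Iff.rfl,
    condMI_pair hp]
  exact congrArg _ (condMI_congr (fun _ _ => Iff.rfl) (fun _ _ => Iff.rfl) fun _ _ => by simp)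

lemma mi_add_condMI_comm (hp : ∀ ω, 0 ≤ p ω) (X : Ω → A) (Y : Ω → B) (Z : Ω → C) :
    mi p X Y + condMI p X Z Y = mi p X Z + condMI p X Y Z := by
  rw [← mi_pair hp, ← mi_pair hp]
  exact condMI_congr (fun _ _ => Iff.rfl) (fun _ _ => Prod.swap_inj.symm) fun _ _ => Iff.rfl

end condMI

theorem stmt6_general {Ω A B C D : Type} [Fintype Ω] [Fintype A] [Fintype B] [Fintype C] [Fintype D]
    [DecidableEq A] [DecidableEq B] [DecidableEq C] [DecidableEq D]
    (p : Ω → ℝ) (hp : ∀ ω, 0 ≤ p ω)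
    (v1 : Ω → A) (v2 : Ω → B) (y : Ω → C) (z1 : Ω → D)
    (hrep : condMI p y z1 (fun ω => (v1 ω, v2 ω)) = 0)
    (hred : condMI p y v1 v2 = 0) :
    mi p y z1 ≥ mi p y v2 - condMI p v1 v2 z1 - condMI p y v2 v1 := by
  have hsplit := mi_add_condMI_comm hp y (fun ω => (v1 ω, v2 ω)) z1
  rw [mi_pair hp, hred, hrep] at hsplit
  have hchain := condMI_pair hp y v1 v2 z1
  have hcross : condMI p v1 y (fun ω => (v2 ω, z1 ω)) = 0 := by
    rw [condMI_comm]
    exact le_antisymm (hred ▸ condMI_pair_le_of_condMI_eq_zero hp hrep) (condMI_nonneg hp _ _ _)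
  have hfirst := condMI_pair_add_comm hp v1 v2 y z1
  rw [hcross, condMI_comm v1 y] at hfirst
  have hsecond : condMI p y v2 (fun ω => (v1 ω, z1 ω)) ≤ condMI p y v2 v1 :=
    condMI_pair_le_of_condMI_eq_zero hp (by rwa [condMI_pair_right_comm])
  linarith [condMI_nonneg hp v1 v2 (fun ω => (y ω, z1 ω))]

theorem stmt6 {Ω A B C D : Type} [Fintype Ω] [Fintype A] [Fintype B] [Fintype C] [Fintype D]
    [DecidableEq A] [DecidableEq B] [DecidableEq C] [DecidableEq D]
    (p : Ω → ℝ) (hp : ∀ ω, 0 ≤ p ω) (hp1 : ∑ ω : Ω, p ω = 1)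
    (v1 : Ω → A) (v2 : Ω → B) (y : Ω → C) (z1 : Ω → D)
    (hrep : condMI p y z1 (fun ω => (v1 ω, v2 ω)) = 0)
    (hred : condMI p y v1 v2 = 0) :
    mi p y z1 ≥ mi p y v2 - condMI p v1 v2 z1 - condMI p y v2 v1 :=
  stmt6_general p hp v1 v2 y z1 hrep hred
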